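/- arXiv:2503.17541 — 2 statements merged into one kernel-verified Lean document; each statement's English description precedes it below -/
import Mathlib

section
/- Let S = A[y] where A = k[x_1,…,x_{n-1}] is a positively Z-graded polynomial ring and deg(y) = d satisfies d ≥ deg(x_i) for all i. Fix e > 0, set M = S_{≥e}, M^{(i)} = M ∩ (y^i), and N = ⌈e/d⌉. Then for each 0 ≤ i < N there is a short exact sequence of S-modules 0 → M^{(i+1)} → M^{(i)} → A_{≥e−di}·S/(y) → 0, where the surjection is induced by the composition M^{(i)} ↪ (y^i) ↠ (y^i)/(y^{i+1}); in particular M^{(i)}/M^{(i+1)} ≅ A_{≥e−di}·S/(y) ≅ A_{≥e−di} as A-modules. -/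
/-!
Background setup.  `MvPolynomial (Fin n) k` is the polynomial ring `S = k[x_1, …, x_n]`
over the field `k`, graded (possibly nonstandardly) by weights `w : Fin n → ℤ` with
`0 < w i`, with graded maximal ideal `m = maxIdeal k n = (x_1, …, x_n)`.

* `trunc k n w e` is the truncation `S_{≥e} = ⊕_{i ≥ e} S_i`, an `S`-submodule of `S`
  (realized as the `S`-span of the weighted-homogeneous elements of weighted degree `≥ e`;
  for positive weights this span is exactly `⊕_{i ≥ e} S_i`).
* `GrRing k n` is the associated graded ring `gr_m(S) = ⊕_{i≥0} m^i/m^{i+1}`, realized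
  as the quotient `Rees(m) ⧸ m·Rees(m)` of the Rees algebra of `m`; it is a standard
  graded polynomial ring over `k = S/m`.
* `GrMod k n M` is the associated graded module `gr_m(M) = ⊕_{i≥0} m^i M/m^{i+1} M` of an
  `S`-module `M`, realized as the quotient of the Rees module `⊕_i m^i M` by
  `m·(⊕_i m^i M)`; it is a module over `gr_m(S) = GrRing k n`.
* `grDeg1 k n` is the degree-one component `m/m²` of `gr_m(S)`, i.e. the set of linear
  forms of the standard graded ring `gr_m(S)`.
* `HasLinearResolution R Lin N` says that `N` admits a free resolution
  `⋯ → F_{i+1} → F_i → ⋯ → F_0 → N → 0` in which every differential is given by a matrix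
  all of whose entries lie in the set `Lin` of linear forms.  For a module generated in
  degree `0` over a standard graded `k`-algebra `R` (with `Lin = R_1`) this is the usual
  notion of a linear resolution: a graded free resolution `F_•` with `F_i` generated in
  degree `i`.
-/

set_option synthInstance.maxHeartbeats 1000000
set_option maxHeartbeats 1000000

noncomputable section
open MvPolynomial

/-- The graded maximal ideal `m = (x_1, …, x_n)` of `S = k[x_1, …, x_n]`. -/
def maxIdeal (k : Type) [Field k] (n : ℕ) : Ideal (MvPolynomial (Fin n) k) :=
  Ideal.span (Set.range MvPolynomial.X)

/-- The truncation `S_{≥e} = ⊕_{i ≥ e} S_i` of the `ℤ`-graded polynomial ring `S` with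
weights `w`. -/
def trunc (k : Type) [Field k] (n : ℕ) (w : Fin n → ℤ) (e : ℤ) :
    Submodule (MvPolynomial (Fin n) k) (MvPolynomial (Fin n) k) :=
  Submodule.span _ (⋃ (d : ℤ) (_ : e ≤ d),
    (MvPolynomial.weightedHomogeneousSubmodule k w d : Set (MvPolynomial (Fin n) k)))

/-- The ideal `m·Rees(m)` of the Rees algebra `Rees(m)`; the quotient by it is `gr_m(S)`. -/
def grIdeal (k : Type) [Field k] (n : ℕ) : Ideal ↥(reesAlgebra (maxIdeal k n)) :=
  (maxIdeal k n).map (algebraMap (MvPolynomial (Fin n) k) ↥(reesAlgebra (maxIdeal k n)))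

/-- The associated graded ring `gr_m(S) = ⊕_{i≥0} m^i/m^{i+1} = Rees(m)/m·Rees(m)`. -/
abbrev GrRing (k : Type) [Field k] (n : ℕ) : Type :=
  ↥(reesAlgebra (maxIdeal k n)) ⧸ grIdeal k n

variable (k : Type) [Field k] (n : ℕ) (M : Type) [AddCommGroup M]
  [Module (MvPolynomial (Fin n) k) M]

/-- The Rees module `⊕_i m^i M` of an `S`-module `M`, a module over the Rees algebra. -/
def ReesMod : Type :=
  ↥(((maxIdeal k n).stableFiltration (⊤ : Submodule (MvPolynomial (Fin n) k) M)).submodule)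

instance : AddCommGroup (ReesMod k n M) := by unfold ReesMod; infer_instance
instance : Module ↥(reesAlgebra (maxIdeal k n)) (ReesMod k n M) := by
  unfold ReesMod; infer_instance

/-- The associated graded module `gr_m(M) = ⊕_{i≥0} m^i M/m^{i+1} M`, realized as the
quotient of the Rees module `⊕_i m^i M` by `m·(⊕_i m^i M)`; a `gr_m(S)`-module. -/
def GrMod : Type :=
  ReesMod k n M ⧸
    ((grIdeal k n) • (⊤ : Submodule ↥(reesAlgebra (maxIdeal k n)) (ReesMod k n M)))

instance : AddCommGroup (GrMod k n M) := by unfold GrMod; infer_instance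
instance : Module (GrRing k n) (GrMod k n M) := by unfold GrMod; infer_instance

/-- The degree-one component `m/m²` of `gr_m(S)`: the set of (classes of) the degree-one
elements `s·t` (`s ∈ m`) of the Rees algebra, i.e. the linear forms of `gr_m(S)`. -/
def grDeg1 : Set (GrRing k n) :=
  {g | ∃ s, ∃ hs : s ∈ maxIdeal k n, g = Ideal.Quotient.mk (grIdeal k n)
      ⟨Polynomial.monomial 1 s, reesAlgebra.monomial_mem.mpr (by simpa using hs)⟩}

/-- `N` has a **linear resolution** over `R` with respect to the set `Lin ⊆ R` of linear
forms (the degree-one component of the standard graded algebra `R`): there is a free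
resolution `⋯ → F_{i+1} → F_i → ⋯ → F_0 → N → 0` in which every differential is given by
a matrix with all entries in `Lin`.  For `N` generated in degree `0` this is the usual
notion of a linear resolution (`F_i` generated in degree `i`). -/
def HasLinearResolution (R : Type*) [CommRing R] (Lin : Set R)
    (N : Type*) [AddCommGroup N] [Module R N] : Prop :=
  ∃ (κ : ℕ → Type) (d : ∀ i : ℕ, (κ (i + 1) →₀ R) →ₗ[R] (κ i →₀ R))
    (ε : (κ 0 →₀ R) →ₗ[R] N),
      Function.Surjective ε ∧
      LinearMap.range (d 0) = LinearMap.ker ε ∧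
      (∀ i, LinearMap.range (d (i + 1)) = LinearMap.ker (d i)) ∧
      (∀ i (a : κ (i + 1)) (b : κ i), d i (Finsupp.single a 1) b ∈ Lin)

/-! ### The splitting `S = A[y]`:
`S = k[x_1, …, x_{n-1}, y]` is `MvPolynomial (Fin (nA + 1)) k` with `y` the last
variable and `A = k[x_1, …, x_{n-1}] = MvPolynomial (Fin nA) k`, included in `S` via
`Fin.castSucc`.  The weights are `w : Fin (nA + 1) → ℤ`, with `d = w (Fin.last nA)` the
degree of `y`. -/

/-- The last variable `y` of `S = A[y]`. -/
def yvar (k : Type) [Field k] (nA : ℕ) : MvPolynomial (Fin (nA + 1)) k :=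
  MvPolynomial.X (Fin.last nA)

/-- The `S`-submodule `A_{≥c}·(y^i)` of `S = A[y]` generated by the products `a·y^i`
with `a ∈ A` homogeneous of degree `≥ c`. -/
def AyPow (k : Type) [Field k] (nA : ℕ) (w : Fin (nA + 1) → ℤ) (c : ℤ) (i : ℕ) :
    Submodule (MvPolynomial (Fin (nA + 1)) k) (MvPolynomial (Fin (nA + 1)) k) :=
  Submodule.span (MvPolynomial (Fin (nA + 1)) k)
    ((fun a => MvPolynomial.rename Fin.castSucc a * (yvar k nA) ^ i) ''
      (trunc k nA (fun l => w (Fin.castSucc l)) c : Set (MvPolynomial (Fin nA) k)))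

/-- The filtration `M^{(i)} = M ∩ (y^i)` of the truncation `M = S_{≥e}`. -/
def Mfilt (k : Type) [Field k] (nA : ℕ) (w : Fin (nA + 1) → ℤ) (e : ℤ) (i : ℕ) :
    Submodule (MvPolynomial (Fin (nA + 1)) k) (MvPolynomial (Fin (nA + 1)) k) :=
  trunc k (nA + 1) w e ⊓ Submodule.span _ {yvar k nA ^ i}

/-- `⌈e/d⌉` as a natural number. -/
def ceilDiv (e d : ℤ) : ℕ := (⌈(e : ℚ) / (d : ℚ)⌉).toNat

/-!
Both `S_{≥e}` (the weights being nonnegative) and `(y^i)` are monomial ideals, so `M^{(i)}` is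
spanned by the monomials of weight `≥ e` and `y`-degree `≥ i`. Modulo `y^{i+1}` only those of
`y`-degree exactly `i` survive, and these are the `a·y^i` with `a` a monomial of `A` of weight
`≥ e - d·i`. Multiplication by `y^i` embeds `S/(y)` into `S/(y^{i+1})`, carrying
`A_{≥e-di}·S/(y)` onto this image.
-/

namespace Finsupp

theorem weight_mapDomain {σ τ : Type*} (w : τ → ℤ) (f : σ → τ) (m : σ →₀ ℕ) :
    weight w (mapDomain f m) = weight (w ∘ f) m :=
  sum_mapDomain_index (fun _ => zero_smul _ _) fun _ _ _ => add_smul _ _ _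

theorem weight_le_weight {σ : Type*} [Fintype σ] {w : σ → ℤ} (hw : ∀ j, 0 ≤ w j)
    {s m : σ →₀ ℕ} (h : s ≤ m) : weight w s ≤ weight w m := by
  simp only [weight_eq_sum]
  exact Finset.sum_le_sum fun j _ => smul_le_smul_of_nonneg_right (h j) (hw j)

variable {n : ℕ}

def init (m : Fin (n + 1) →₀ ℕ) : Fin n →₀ ℕ :=
  comapDomain Fin.castSucc m (Fin.castSucc_injective n).injOn

@[simp] theorem init_apply (m : Fin (n + 1) →₀ ℕ) (l : Fin n) : init m l = m l.castSucc := rfl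

theorem mapDomain_castSucc_init_add_single_last (m : Fin (n + 1) →₀ ℕ) :
    mapDomain Fin.castSucc (init m) + single (Fin.last n) (m (Fin.last n)) = m := by
  ext j
  induction j using Fin.lastCases with
  | last =>
    have : Fin.last n ∉ Set.range Fin.castSucc := by
      rintro ⟨l, hl⟩
      exact (Fin.castSucc_lt_last l).ne hl
    simp [mapDomain_of_notMem_range _ _ this]
  | cast l =>
    simp [mapDomain_apply (Fin.castSucc_injective n)]

theorem weight_eq_weight_init_add (w : Fin (n + 1) → ℤ) (m : Fin (n + 1) →₀ ℕ) :
    weight w m = weight (fun l => w l.castSucc) (init m) + m (Fin.last n) • w (Fin.last n) := by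
  simp [weight_eq_sum, Fin.sum_univ_castSucc]

end Finsupp

theorem Submodule.map_mkQ_eq_of_le_of_le_sup {R M : Type*} [Ring R] [AddCommGroup M]
    [Module R M] {J X Y : Submodule R M} (hYX : Y ≤ X) (hXY : X ≤ Y ⊔ J) :
    X.map J.mkQ = Y.map J.mkQ :=
  le_antisymm (Submodule.map_le_iff_le_comap.mpr (by rwa [Submodule.comap_map_mkQ, sup_comm]))
    (Submodule.map_mono hYX)

section QuotMulLeft

variable {R : Type*} [CommRing R] (a b : R)

def quotMulLeft : (R ⧸ Submodule.span R {a}) →ₗ[R] R ⧸ Submodule.span R {b * a} :=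
  (Submodule.span R {a}).liftQ ((Submodule.span R {b * a}).mkQ ∘ₗ LinearMap.mulLeft R b) <| by
    rw [Submodule.span_le, Set.singleton_subset_iff]
    simp

theorem quotMulLeft_comp_mkQ :
    quotMulLeft a b ∘ₗ (Submodule.span R {a}).mkQ =
      (Submodule.span R {b * a}).mkQ ∘ₗ LinearMap.mulLeft R b :=
  Submodule.liftQ_mkQ _ _ _

theorem quotMulLeft_injective [IsDomain R] {b : R} (hb : b ≠ 0) :
    Function.Injective (quotMulLeft a b) := by
  refine LinearMap.ker_eq_bot.mp (Submodule.ker_liftQ_eq_bot _ _ _ fun x hx => ?_)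
  simp only [LinearMap.mem_ker, LinearMap.comp_apply, LinearMap.mulLeft_apply,
    Submodule.mkQ_apply, Submodule.Quotient.mk_eq_zero] at hx
  obtain ⟨c, hc⟩ := Submodule.mem_span_singleton.mp hx
  refine Submodule.mem_span_singleton.mpr ⟨c, mul_left_cancel₀ hb ?_⟩
  rw [smul_eq_mul] at hc ⊢
  rw [← hc]
  ring

end QuotMulLeft

section Trunc

variable {k : Type} [Field k] {n : ℕ} {w : Fin n → ℤ} {e : ℤ}

theorem mem_trunc_of_isWeightedHomogeneous {p : MvPolynomial (Fin n) k} {d : ℤ}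
    (hp : IsWeightedHomogeneous w p d) (hd : e ≤ d) : p ∈ trunc k n w e :=
  Submodule.subset_span <| Set.mem_iUnion₂.mpr ⟨d, hd, hp⟩

theorem monomial_mem_trunc {m : Fin n →₀ ℕ} (hm : e ≤ Finsupp.weight w m) (r : k) :
    monomial m r ∈ trunc k n w e :=
  mem_trunc_of_isWeightedHomogeneous (isWeightedHomogeneous_monomial w m r rfl) hm

theorem trunc_eq_span_monomial :
    trunc k n w e =
      Ideal.span ((fun m => monomial m (1 : k)) '' {m | e ≤ Finsupp.weight w m}) := by
  apply le_antisymm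
  · refine Submodule.span_le.mpr fun p hp => ?_
    obtain ⟨d, hed, hp⟩ := Set.mem_iUnion₂.mp hp
    refine mem_ideal_span_monomial_image.mpr fun m hm => ⟨m, ?_, le_rfl⟩
    exact hed.trans_eq ((SetLike.mem_coe.mp hp) (mem_support_iff.mp hm)).symm
  · refine Ideal.span_le.mpr ?_
    rintro _ ⟨m, hm, rfl⟩
    exact monomial_mem_trunc hm 1

theorem le_weight_of_mem_trunc (hw : ∀ j, 0 ≤ w j) {p : MvPolynomial (Fin n) k}
    (hp : p ∈ trunc k n w e) {m : Fin n →₀ ℕ} (hm : m ∈ p.support) :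
    e ≤ Finsupp.weight w m := by
  rw [trunc_eq_span_monomial] at hp
  obtain ⟨s, hs, hsm⟩ := mem_ideal_span_monomial_image.mp hp m hm
  exact le_trans hs (Finsupp.weight_le_weight hw hsm)

theorem mul_mem_trunc {a b : ℤ} {p q : MvPolynomial (Fin n) k} (hp : p ∈ trunc k n w a)
    (hq : q ∈ trunc k n w b) : p * q ∈ trunc k n w (a + b) := by
  have hpq : p * q ∈ Ideal.span _ * Ideal.span _ := Ideal.mul_mem_mul hp hq
  rw [Ideal.span_mul_span'] at hpq
  refine Ideal.span_le.mpr ?_ hpq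
  rintro _ ⟨p, hp, q, hq, rfl⟩
  obtain ⟨c, hac, hp⟩ := Set.mem_iUnion₂.mp hp
  obtain ⟨d, hbd, hq⟩ := Set.mem_iUnion₂.mp hq
  exact mem_trunc_of_isWeightedHomogeneous (hp.mul hq) (add_le_add hac hbd)

theorem rename_mem_trunc {n' : ℕ} (f : Fin n' → Fin n) {p : MvPolynomial (Fin n') k}
    (hp : p ∈ trunc k n' (w ∘ f) e) : rename f p ∈ trunc k n w e := by
  rw [trunc_eq_span_monomial] at hp
  suffices Ideal.map (rename f) (Ideal.span _) ≤ trunc k n w e from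
    this (Ideal.mem_map_of_mem _ hp)
  rw [Ideal.map_span, Ideal.span_le]
  rintro _ ⟨_, ⟨m, hm, rfl⟩, rfl⟩
  rw [rename_monomial]
  refine monomial_mem_trunc ?_ 1
  rwa [Finsupp.weight_mapDomain]

end Trunc

section LastVariable

variable {k : Type} [Field k] {nA : ℕ} {i : ℕ}

theorem yvar_pow_eq_monomial :
    yvar k nA ^ i = monomial (Finsupp.single (Fin.last nA) i) 1 :=
  X_pow_eq_monomial

theorem le_of_mem_span_yvar_pow {p : MvPolynomial (Fin (nA + 1)) k}
    (hp : p ∈ Submodule.span (MvPolynomial (Fin (nA + 1)) k) {yvar k nA ^ i})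
    {m : Fin (nA + 1) →₀ ℕ} (hm : m ∈ p.support) : i ≤ m (Fin.last nA) := by
  have hp' : p ∈ Ideal.span ((fun s => monomial s (1 : k)) ''
      {Finsupp.single (Fin.last nA) i}) := by
    rwa [Set.image_singleton, ← yvar_pow_eq_monomial]
  obtain ⟨s, rfl, hs⟩ := mem_ideal_span_monomial_image.mp hp' m hm
  exact Finsupp.single_le_iff.mp hs

theorem monomial_mem_span_yvar_pow {m : Fin (nA + 1) →₀ ℕ} (h : i ≤ m (Fin.last nA))
    (r : k) :
    monomial m r ∈ Submodule.span (MvPolynomial (Fin (nA + 1)) k) {yvar k nA ^ i} := by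
  refine Submodule.mem_span_singleton.mpr ⟨monomial (m - Finsupp.single (Fin.last nA) i) r, ?_⟩
  rw [smul_eq_mul, yvar_pow_eq_monomial, monomial_mul, mul_one,
    tsub_add_cancel_of_le (Finsupp.single_le_iff.mpr h)]

theorem monomial_eq_rename_mul_yvar_pow (m : Fin (nA + 1) →₀ ℕ) (r : k) :
    monomial m r = rename Fin.castSucc (monomial m.init r) * yvar k nA ^ m (Fin.last nA) := by
  rw [rename_monomial, yvar_pow_eq_monomial, monomial_mul, mul_one,
    Finsupp.mapDomain_castSucc_init_add_single_last]

end LastVariable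

section Filtration

variable {k : Type} [Field k] {nA : ℕ} {w : Fin (nA + 1) → ℤ} {e : ℤ} {i : ℕ}

theorem AyPow_le_Mfilt : AyPow k nA w (e - w (Fin.last nA) * i) i ≤ Mfilt k nA w e i := by
  refine Submodule.span_le.mpr ?_
  rintro _ ⟨a, ha, rfl⟩
  refine ⟨?_, Submodule.smul_mem _ _ (Submodule.mem_span_singleton_self _)⟩
  have hy : yvar k nA ^ i ∈ trunc k (nA + 1) w (w (Fin.last nA) * i) :=
    mem_trunc_of_isWeightedHomogeneous ((isWeightedHomogeneous_X k w _).pow i)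
      (by rw [nsmul_eq_mul, mul_comm])
  simpa using mul_mem_trunc (rename_mem_trunc Fin.castSucc ha) hy

theorem Mfilt_le_AyPow_sup (hw : ∀ j, 0 ≤ w j) :
    Mfilt k nA w e i ≤ AyPow k nA w (e - w (Fin.last nA) * i) i ⊔
      Submodule.span (MvPolynomial (Fin (nA + 1)) k) {yvar k nA ^ (i + 1)} := by
  rintro p ⟨hpe, hpy⟩
  rw [p.as_sum]
  refine Submodule.sum_mem _ fun m hm => ?_
  rcases (le_of_mem_span_yvar_pow hpy hm).eq_or_lt with hmi | hmi
  · refine Submodule.mem_sup_left ?_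
    rw [monomial_eq_rename_mul_yvar_pow, ← hmi]
    refine Submodule.subset_span ⟨_, monomial_mem_trunc ?_ _, rfl⟩
    have hwm := le_weight_of_mem_trunc hw hpe hm
    rw [Finsupp.weight_eq_weight_init_add, ← hmi, nsmul_eq_mul] at hwm
    linarith
  · exact Submodule.mem_sup_right (monomial_mem_span_yvar_pow hmi _)

theorem ker_mkQ_comp_Mfilt_subtype :
    LinearMap.ker ((Submodule.span (MvPolynomial (Fin (nA + 1)) k)
        {yvar k nA ^ (i + 1)}).mkQ ∘ₗ (Mfilt k nA w e i).subtype) =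
      (Mfilt k nA w e (i + 1)).comap (Mfilt k nA w e i).subtype := by
  rw [LinearMap.ker_comp, Submodule.ker_mkQ]
  ext p
  exact ⟨fun hp => ⟨p.2.1, hp⟩, And.right⟩

theorem range_mkQ_comp_Mfilt_subtype (hw : ∀ j, 0 ≤ w j) :
    LinearMap.range ((Submodule.span (MvPolynomial (Fin (nA + 1)) k)
        {yvar k nA ^ (i + 1)}).mkQ ∘ₗ (Mfilt k nA w e i).subtype) =
      (AyPow k nA w (e - w (Fin.last nA) * i) i).map (Submodule.mkQ _) := by
  rw [LinearMap.range_comp, Submodule.range_subtype]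
  exact Submodule.map_mkQ_eq_of_le_of_le_sup AyPow_le_Mfilt (Mfilt_le_AyPow_sup hw)

theorem map_mulLeft_yvar_pow_AyPow (c : ℤ) :
    (AyPow k nA w c 0).map (LinearMap.mulLeft _ (yvar k nA ^ i)) = AyPow k nA w c i := by
  rw [AyPow, AyPow, Submodule.map_span, Set.image_image]
  simp only [LinearMap.mulLeft_apply, pow_zero, one_mul, mul_comm]

theorem nonempty_linearEquiv_map_mkQ_AyPow (c : ℤ) :
    Nonempty ((AyPow k nA w c i).map
        (Submodule.span (MvPolynomial (Fin (nA + 1)) k) {yvar k nA ^ (i + 1)}).mkQ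
      ≃ₗ[MvPolynomial (Fin (nA + 1)) k]
      (AyPow k nA w c 0).map
        (Submodule.span (MvPolynomial (Fin (nA + 1)) k) {yvar k nA}).mkQ) := by
  rw [pow_succ, ← map_mulLeft_yvar_pow_AyPow, ← Submodule.map_comp,
    ← quotMulLeft_comp_mkQ, Submodule.map_comp]
  exact ⟨(Submodule.equivMapOfInjective _
    (quotMulLeft_injective _ (pow_ne_zero i (X_ne_zero _))) _).symm⟩

end Filtration

/-- The paper's surjection `M^{(i)} ↪ (y^i) ↠ (y^i)/(y^{i+1})` is modelled as the composite
`M^{(i)} → S → S/(y^{i+1})`. -/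
theorem filtration_quotient_general (k : Type) [Field k] (nA : ℕ)
    (w : Fin (nA + 1) → ℤ) (hw : ∀ i, 0 < w i)
    (e : ℤ) (i : ℕ) :
    LinearMap.ker ((Submodule.mkQ
        (Submodule.span (MvPolynomial (Fin (nA + 1)) k) {yvar k nA ^ (i + 1)})).comp
        (Mfilt k nA w e i).subtype) =
      Submodule.comap (Mfilt k nA w e i).subtype (Mfilt k nA w e (i + 1)) ∧
    LinearMap.range ((Submodule.mkQ
        (Submodule.span (MvPolynomial (Fin (nA + 1)) k) {yvar k nA ^ (i + 1)})).comp
        (Mfilt k nA w e i).subtype) =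
      Submodule.map (Submodule.mkQ _)
        (AyPow k nA w (e - w (Fin.last nA) * i) i) ∧
    Nonempty ((↥(Mfilt k nA w e i) ⧸
        Submodule.comap (Mfilt k nA w e i).subtype (Mfilt k nA w e (i + 1)))
      ≃ₗ[MvPolynomial (Fin (nA + 1)) k]
        ↥(Submodule.map
          (Submodule.mkQ (Submodule.span (MvPolynomial (Fin (nA + 1)) k) {yvar k nA}))
          (AyPow k nA w (e - w (Fin.last nA) * i) 0))) := by
  have hker := ker_mkQ_comp_Mfilt_subtype (k := k) (w := w) (e := e) (i := i)
  have hrange := range_mkQ_comp_Mfilt_subtype (k := k) (e := e) (i := i) fun j => (hw j).le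
  obtain ⟨shift⟩ := nonempty_linearEquiv_map_mkQ_AyPow (k := k) (w := w) (i := i)
    (e - w (Fin.last nA) * i)
  refine ⟨hker, hrange, ⟨?_⟩⟩
  exact (Submodule.quotEquivOfEq _ _ hker.symm).trans <|
    (LinearMap.quotKerEquivRange _).trans <| (LinearEquiv.ofEq _ _ hrange).trans shift

/-- For `0 ≤ i < N = ⌈e/d⌉` there is a short exact sequence of `S`-modules
`0 → M^{(i+1)} → M^{(i)} → A_{≥e-di}·S/(y) → 0`, where the surjection is (induced by)
`ψ : M^{(i)} ↪ (y^i) ↠ (y^i)/(y^{i+1})`, realized below as the composite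
`ᾱ : M^{(i)} → S → S/(y^{i+1})`.  Precisely: `ker ᾱ = M^{(i+1)}`,
`range ᾱ = (A_{≥e-di}·(y^i) + (y^{i+1}))/(y^{i+1})`, and consequently
`M^{(i)}/M^{(i+1)} ≅ A_{≥e-di}·S/(y)` as `S`-modules. -/
theorem filtration_quotient (k : Type) [Field k] (nA : ℕ)
    (w : Fin (nA + 1) → ℤ) (hw : ∀ i, 0 < w i)
    (hd : ∀ l : Fin nA, w (Fin.castSucc l) ≤ w (Fin.last nA))
    (e : ℤ) (he : 0 < e) (i : ℕ) (hi : i < ceilDiv e (w (Fin.last nA))) :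
    LinearMap.ker ((Submodule.mkQ
        (Submodule.span (MvPolynomial (Fin (nA + 1)) k) {yvar k nA ^ (i + 1)})).comp
        (Mfilt k nA w e i).subtype) =
      Submodule.comap (Mfilt k nA w e i).subtype (Mfilt k nA w e (i + 1)) ∧
    LinearMap.range ((Submodule.mkQ
        (Submodule.span (MvPolynomial (Fin (nA + 1)) k) {yvar k nA ^ (i + 1)})).comp
        (Mfilt k nA w e i).subtype) =
      Submodule.map (Submodule.mkQ _)
        (AyPow k nA w (e - w (Fin.last nA) * i) i) ∧
    Nonempty ((↥(Mfilt k nA w e i) ⧸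
        Submodule.comap (Mfilt k nA w e i).subtype (Mfilt k nA w e (i + 1)))
      ≃ₗ[MvPolynomial (Fin (nA + 1)) k]
        ↥(Submodule.map
          (Submodule.mkQ (Submodule.span (MvPolynomial (Fin (nA + 1)) k) {yvar k nA}))
          (AyPow k nA w (e - w (Fin.last nA) * i) 0))) :=
  filtration_quotient_general k nA w hw e i
end
end

section
/- Let S = A[y] where A = k[x_1,…,x_{n-1}] is a positively Z-graded polynomial ring, deg(y) = d ≥ deg(x_i) for all i, and m is the maximal ideal of S. Fix e > 0, set M = S_{≥e}, M^{(i)} = M ∩ (y^i), N = ⌈e/d⌉, and A^{(i)} = A_{≥e−di}·S/(y). Then for each 0 ≤ i < N, the short exact sequence 0 → M^{(i+1)} → M^{(i)} → A^{(i)} → 0 induces a short exact sequence of gr_m(S)-modules 0 → gr_m(M^{(i+1)}) → gr_m(M^{(i)}) → gr_m(A^{(i)}) → 0 on associated graded modules. -/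
/-!
Background setup.  `MvPolynomial (Fin n) k` is the polynomial ring `S = k[x_1, …, x_n]`
over the field `k`, graded (possibly nonstandardly) by weights `w : Fin n → ℤ` with
`0 < w i`, with graded maximal ideal `m = maxIdeal k n = (x_1, …, x_n)`.

* `trunc k n w e` is the truncation `S_{≥e} = ⊕_{i ≥ e} S_i`, an `S`-submodule of `S`
  (realized as the `S`-span of the weighted-homogeneous elements of weighted degree `≥ e`;
  for positive weights this span is exactly `⊕_{i ≥ e} S_i`).
* `GrRing k n` is the associated graded ring `gr_m(S) = ⊕_{i≥0} m^i/m^{i+1}`, realized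
  as the quotient `Rees(m) ⧸ m·Rees(m)` of the Rees algebra of `m`; it is a standard
  graded polynomial ring over `k = S/m`.
* `GrMod k n M` is the associated graded module `gr_m(M) = ⊕_{i≥0} m^i M/m^{i+1} M` of an
  `S`-module `M`, realized as the quotient of the Rees module `⊕_i m^i M` by
  `m·(⊕_i m^i M)`; it is a module over `gr_m(S) = GrRing k n`.
* `grDeg1 k n` is the degree-one component `m/m²` of `gr_m(S)`, i.e. the set of linear
  forms of the standard graded ring `gr_m(S)`.
* `HasLinearResolution R Lin N` says that `N` admits a free resolution
  `⋯ → F_{i+1} → F_i → ⋯ → F_0 → N → 0` in which every differential is given by a matrix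
  all of whose entries lie in the set `Lin` of linear forms.  For a module generated in
  degree `0` over a standard graded `k`-algebra `R` (with `Lin = R_1`) this is the usual
  notion of a linear resolution: a graded free resolution `F_•` with `F_i` generated in
  degree `i`.
-/

set_option synthInstance.maxHeartbeats 1000000
set_option maxHeartbeats 1000000

noncomputable section
open MvPolynomial

variable (k : Type) [Field k] (n : ℕ) (M : Type) [AddCommGroup M]
  [Module (MvPolynomial (Fin n) k) M]

section Pieces

variable (k : Type) [Field k] (nA : ℕ)

/-- The `j`-th graded piece `m^j P / m^{j+1} P` of the associated graded module
`gr_m(P)` of a submodule `P ⊆ S` (with its `m`-adic filtration). -/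
def grPiece (P : Submodule (MvPolynomial (Fin (nA + 1)) k) (MvPolynomial (Fin (nA + 1)) k))
    (j : ℕ) : Type :=
  ↥((maxIdeal k (nA + 1)) ^ j • P) ⧸
    Submodule.comap ((maxIdeal k (nA + 1)) ^ j • P).subtype
      ((maxIdeal k (nA + 1)) ^ (j + 1) • P)

instance (P) (j : ℕ) : AddCommGroup (grPiece k nA P j) := by
  unfold grPiece; infer_instance

instance (P) (j : ℕ) : Module (MvPolynomial (Fin (nA + 1)) k) (grPiece k nA P j) := by
  unfold grPiece; infer_instance

/-- The map `m^j P/m^{j+1} P → m^j Q/m^{j+1} Q` of graded pieces induced by an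
inclusion `P ≤ Q`. -/
def grPieceMap {P Q : Submodule (MvPolynomial (Fin (nA + 1)) k)
      (MvPolynomial (Fin (nA + 1)) k)} (h : P ≤ Q) (j : ℕ) :
    grPiece k nA P j →ₗ[MvPolynomial (Fin (nA + 1)) k] grPiece k nA Q j :=
  Submodule.mapQ _ _ (Submodule.inclusion (Submodule.smul_mono le_rfl h))
    (fun x hx => by
      simpa using Submodule.smul_mono (le_refl ((maxIdeal k (nA + 1)) ^ (j + 1))) h hx)

/-- The `j`-th graded piece `m^j Ā / m^{j+1} Ā` of `gr_m(Ā)`, where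
`Ā = P/(P ∩ (y^t))` is the image of `P` in `S/(y^t)`. -/
def grPieceIm (P : Submodule (MvPolynomial (Fin (nA + 1)) k)
      (MvPolynomial (Fin (nA + 1)) k)) (t : ℕ) (j : ℕ) : Type :=
  ↥(Submodule.map (Submodule.mkQ
        (Submodule.span (MvPolynomial (Fin (nA + 1)) k) {yvar k nA ^ t}))
      ((maxIdeal k (nA + 1)) ^ j • P)) ⧸
    Submodule.comap (Submodule.map (Submodule.mkQ
        (Submodule.span (MvPolynomial (Fin (nA + 1)) k) {yvar k nA ^ t}))
      ((maxIdeal k (nA + 1)) ^ j • P)).subtype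
      (Submodule.map (Submodule.mkQ
          (Submodule.span (MvPolynomial (Fin (nA + 1)) k) {yvar k nA ^ t}))
        ((maxIdeal k (nA + 1)) ^ (j + 1) • P))

instance (P) (t j : ℕ) : AddCommGroup (grPieceIm k nA P t j) := by
  unfold grPieceIm; infer_instance

instance (P) (t j : ℕ) : Module (MvPolynomial (Fin (nA + 1)) k) (grPieceIm k nA P t j) := by
  unfold grPieceIm; infer_instance

/-- The map of graded pieces `m^j P/m^{j+1} P → m^j Ā/m^{j+1} Ā` induced by the
canonical surjection `P → Ā = P/(P ∩ (y^t))`. -/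
def grPieceToIm (P : Submodule (MvPolynomial (Fin (nA + 1)) k)
      (MvPolynomial (Fin (nA + 1)) k)) (t : ℕ) (j : ℕ) :
    grPiece k nA P j →ₗ[MvPolynomial (Fin (nA + 1)) k] grPieceIm k nA P t j :=
  Submodule.mapQ _ _ ((Submodule.mkQ _).restrict
      (fun x hx => Submodule.mem_map_of_mem hx))
    (fun x hx => by exact Submodule.mem_map_of_mem hx)

end Pieces

/-! All modules involved are monomial ideals of `S`: `m^j M^{(t)}` is spanned by the monomials
`x^(ν + b)` with `|ν| ≥ j`, `deg b ≥ e` and `b_y ≥ t`. Exactness of the sequence of graded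
pieces reduces to two inclusions between such ideals, and both follow from one exchange: a
monomial of `m^j M^{(i)}` divisible by `y^(i+1)` already lies in `m^j M^{(i+1)}`. Indeed, if
`b_y = i`, then `deg b ≥ e > i·d` forces some `x_l` to divide `x^b`, and since `deg x_l ≤ d`,
trading this `x_l` for a `y` of `x^ν` keeps `|ν|` and does not lower `deg b`. -/

open scoped Pointwise

theorem IsUpperSet.add_right' {α : Type*} [AddCommMonoid α] [PartialOrder α]
    [CanonicallyOrderedAdd α] {s t : Set α} (hs : IsUpperSet s) : IsUpperSet (s + t) := by
  rintro _ b hle ⟨u, hu, v, hv, rfl⟩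
  obtain ⟨c, rfl⟩ := exists_add_of_le hle
  exact ⟨u + c, hs le_self_add hu, v, hv, (add_right_comm u v c).symm⟩

namespace Finsupp

variable {σ : Type*}

theorem isUpperSet_le_apply (i : σ) (t : ℕ) : IsUpperSet {a : σ →₀ ℕ | t ≤ a i} :=
  isUpperSet_setOfPred.2 fun _ _ hab h => h.trans (hab i)

variable {w : σ → ℤ}

theorem weight_nonneg (hw : ∀ i, 0 ≤ w i) (a : σ →₀ ℕ) : 0 ≤ weight w a :=
  Finset.sum_nonneg fun i _ => nsmul_nonneg (hw i) _

theorem weight_mono (hw : ∀ i, 0 ≤ w i) : Monotone (weight w : (σ →₀ ℕ) → ℤ) := by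
  intro a b hab
  obtain ⟨c, rfl⟩ := exists_add_of_le hab
  rw [map_add]
  exact le_add_of_nonneg_right (weight_nonneg hw c)

theorem isUpperSet_le_weight (hw : ∀ i, 0 ≤ w i) (e : ℤ) :
    IsUpperSet {a : σ →₀ ℕ | e ≤ weight w a} :=
  isUpperSet_setOfPred.2 fun _ _ hab h => h.trans (weight_mono hw hab)

end Finsupp

namespace MvPolynomial

variable {σ R : Type*} [CommSemiring R] {s t : Set (σ →₀ ℕ)}

theorem mem_restrictSupportIdeal_iff {hs : IsUpperSet s} {p : MvPolynomial σ R} :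
    p ∈ restrictSupportIdeal R s hs ↔ ↑p.support ⊆ s :=
  .rfl

theorem restrictSupportIdeal_mono {hs : IsUpperSet s} {ht : IsUpperSet t} (hst : s ⊆ t) :
    restrictSupportIdeal R s hs ≤ restrictSupportIdeal R t ht :=
  fun _ hp => hp.trans hst

theorem restrictSupportIdeal_le_iff {hs : IsUpperSet s} {I : Ideal (MvPolynomial σ R)} :
    restrictSupportIdeal R s hs ≤ I ↔ ∀ a ∈ s, monomial a 1 ∈ I := by
  refine ⟨fun h a ha => h ?_, fun h p hp => ?_⟩
  · exact (Finset.coe_subset.2 support_monomial_subset).trans (by simpa using ha)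
  · have hp' : p ∈ restrictSupport R s := hp
    rw [restrictSupport_eq_span] at hp'
    refine (Submodule.span_le (p := I.restrictScalars R)).2 ?_ hp'
    rintro _ ⟨a, ha, rfl⟩
    exact h a ha

theorem restrictSupportIdeal_inf (hs : IsUpperSet s) (ht : IsUpperSet t) :
    restrictSupportIdeal R s hs ⊓ restrictSupportIdeal R t ht =
      restrictSupportIdeal R (s ∩ t) (hs.inter ht) := by
  ext p
  simp only [Submodule.mem_inf, mem_restrictSupportIdeal_iff, Set.subset_inter_iff]

theorem restrictSupportIdeal_sup (hs : IsUpperSet s) (ht : IsUpperSet t) :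
    restrictSupportIdeal R s hs ⊔ restrictSupportIdeal R t ht =
      restrictSupportIdeal R (s ∪ t) (hs.union ht) := by
  apply Submodule.restrictScalars_injective R
  simp only [Submodule.restrictScalars_sup, restrictScalars_restrictSupportIdeal,
    restrictSupport, AddMonoidAlgebra.supported, Finsupp.supported_union,
    Submodule.comap_equiv_eq_map_symm, Submodule.map_sup]

theorem restrictSupportIdeal_mul (hs : IsUpperSet s) (ht : IsUpperSet t) :
    restrictSupportIdeal R s hs * restrictSupportIdeal R t ht =
      restrictSupportIdeal R (s + t) hs.add_right' := by
  apply Submodule.restrictScalars_injective R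
  simp only [Ideal.restrictScalars_mul, restrictScalars_restrictSupportIdeal, restrictSupport_add]

theorem span_X_pow_eq_restrictSupportIdeal (i : σ) (t : ℕ) :
    Submodule.span (MvPolynomial σ R) {X i ^ t} =
      restrictSupportIdeal R {a | t ≤ a i} (Finsupp.isUpperSet_le_apply i t) := by
  ext p
  rw [X_pow_eq_monomial, ← Set.image_singleton (f := (monomial · (1 : R))),
    mem_ideal_span_monomial_image]
  simp [mem_restrictSupportIdeal_iff, Finsupp.single_le_iff, Set.subset_def]

end MvPolynomial

open Finsupp

theorem trunc_eq_restrictSupportIdeal (k : Type) [Field k] (n : ℕ) {w : Fin n → ℤ}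
    (hw : ∀ i, 0 ≤ w i) (e : ℤ) :
    trunc k n w e = restrictSupportIdeal k {a | e ≤ weight w a} (isUpperSet_le_weight hw e) := by
  refine le_antisymm ?_ (restrictSupportIdeal_le_iff.2 fun a ha => Submodule.subset_span ?_)
  · rw [trunc, Submodule.span_le]
    intro g hg a ha
    obtain ⟨D, hD, hgD⟩ := Set.mem_iUnion₂.1 hg
    exact hD.trans_eq (hgD (MvPolynomial.mem_support_iff.1 ha)).symm
  · exact Set.mem_iUnion₂.2 ⟨_, ha, isWeightedHomogeneous_monomial w a 1 rfl⟩

section Exponents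

variable {nA : ℕ} (w : Fin (nA + 1) → ℤ) (e : ℤ)

def mfiltExps (t : ℕ) : Set (Fin (nA + 1) →₀ ℕ) :=
  {a | e ≤ weight w a} ∩ {a | t ≤ a (Fin.last nA)}

def powSmulMfiltExps (j t : ℕ) : Set (Fin (nA + 1) →₀ ℕ) :=
  degree ⁻¹' Set.Ici j + mfiltExps w e t

variable {w e}

theorem isUpperSet_mfiltExps (hw : ∀ i, 0 ≤ w i) (t : ℕ) : IsUpperSet (mfiltExps w e t) :=
  (isUpperSet_le_weight hw e).inter (isUpperSet_le_apply _ t)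

theorem isUpperSet_powSmulMfiltExps (j t : ℕ) : IsUpperSet (powSmulMfiltExps w e j t) :=
  ((isUpperSet_Ici j).preimage degree_mono).add_right'

theorem le_apply_last_of_mem_powSmulMfiltExps {j t : ℕ} {a : Fin (nA + 1) →₀ ℕ}
    (ha : a ∈ powSmulMfiltExps w e j t) : t ≤ a (Fin.last nA) := by
  obtain ⟨ν, -, b, ⟨-, hb⟩, rfl⟩ := ha
  exact hb.trans (by simp)

theorem mem_powSmulMfiltExps_succ (hd : ∀ l : Fin nA, w l.castSucc ≤ w (Fin.last nA))
    {i j : ℕ} (hie : i * w (Fin.last nA) < e) {a : Fin (nA + 1) →₀ ℕ}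
    (ha : a ∈ powSmulMfiltExps w e j i) (hay : i + 1 ≤ a (Fin.last nA)) :
    a ∈ powSmulMfiltExps w e j (i + 1) := by
  obtain ⟨ν, hν, b, ⟨hbw, hby⟩, rfl⟩ := ha
  by_cases hb : i + 1 ≤ b (Fin.last nA)
  · exact ⟨ν, hν, b, ⟨hbw, hb⟩, rfl⟩
  have hby : b (Fin.last nA) = i := by simp only [Set.mem_ofPred_eq] at hby; omega
  have hνy : ν (Fin.last nA) ≠ 0 := by simp only [Finsupp.coe_add, Pi.add_apply] at hay; omega
  obtain ⟨l, hbl⟩ : ∃ l : Fin nA, b l.castSucc ≠ 0 := by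
    by_contra! hx
    have hbw' : weight w b = i * w (Fin.last nA) := by
      simp [weight_eq_sum, Fin.sum_univ_castSucc, hx, hby]
    exact (hbw.trans_eq hbw').not_gt hie
  refine ⟨ν - single (Fin.last nA) 1 + single l.castSucc 1, ?_,
    b - single l.castSucc 1 + single (Fin.last nA) 1, ⟨?_, ?_⟩, ?_⟩
  · have hdeg := congrArg degree (sub_add_single_one_cancel hνy)
    simp only [Set.mem_preimage, Set.mem_Ici, map_add, degree_single] at hν hdeg ⊢
    omega
  · have hwt := weight_sub_single_add (w := w) hbl
    simp only [Set.mem_ofPred_eq, map_add, weight_single, one_smul] at hbw ⊢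
    linarith [hd l]
  · simp [hby, (Fin.castSucc_lt_last l).ne]
  · calc ν - single (Fin.last nA) 1 + single l.castSucc 1 +
          (b - single l.castSucc 1 + single (Fin.last nA) 1)
        = (ν - single (Fin.last nA) 1 + single (Fin.last nA) 1) +
          (b - single l.castSucc 1 + single l.castSucc 1) := by ac_rfl
      _ = ν + b := by rw [sub_add_single_one_cancel hνy, sub_add_single_one_cancel hbl]

end Exponents

section Filtration

variable {k : Type} [Field k] {nA : ℕ}

local notation "S" => MvPolynomial (Fin (nA + 1)) k
local notation "𝔪" => maxIdeal k (nA + 1)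

theorem grPieceMap_injective {P Q : Submodule S S} (h : P ≤ Q) (j : ℕ)
    (hPQ : 𝔪 ^ j • P ⊓ 𝔪 ^ (j + 1) • Q ≤ 𝔪 ^ (j + 1) • P) :
    Function.Injective (grPieceMap k nA h j) := by
  rw [← LinearMap.ker_eq_bot, LinearMap.ker_eq_bot']
  intro x hx
  obtain ⟨⟨v, hv⟩, rfl⟩ := Submodule.Quotient.mk_surjective _ x
  erw [Submodule.Quotient.mk_eq_zero] at hx ⊢
  exact hPQ ⟨hv, hx⟩

theorem range_grPieceMap_eq_ker_grPieceToIm {P' P : Submodule S S} (h : P' ≤ P) (t j : ℕ)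
    (hP' : P' ≤ Submodule.span S {yvar k nA ^ t})
    (hex : 𝔪 ^ j • P ⊓ (𝔪 ^ (j + 1) • P ⊔ Submodule.span S {yvar k nA ^ t}) ≤
      𝔪 ^ (j + 1) • P ⊔ 𝔪 ^ j • P') :
    LinearMap.range (grPieceMap k nA h j) = LinearMap.ker (grPieceToIm k nA P t j) := by
  refine le_antisymm ?_ fun x hx => ?_
  · rintro _ ⟨x, rfl⟩
    obtain ⟨⟨v, hv⟩, rfl⟩ := Submodule.Quotient.mk_surjective _ x
    erw [LinearMap.mem_ker, Submodule.Quotient.mk_eq_zero]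
    show Submodule.Quotient.mk v ∈ Submodule.map (Submodule.span S {yvar k nA ^ t}).mkQ _
    rw [(Submodule.Quotient.mk_eq_zero _).2 (hP' (Submodule.smul_le_right hv))]
    exact zero_mem _
  · rw [LinearMap.mem_ker] at hx
    obtain ⟨⟨v, hv⟩, rfl⟩ := Submodule.Quotient.mk_surjective _ x
    erw [Submodule.Quotient.mk_eq_zero] at hx
    have hvQ : v ∈ 𝔪 ^ (j + 1) • P ⊔ Submodule.span S {yvar k nA ^ t} := by
      rw [sup_comm, ← Submodule.comap_map_mkQ]
      exact hx
    obtain ⟨s, hs, u, hu, rfl⟩ := Submodule.mem_sup.1 (hex ⟨hv, hvQ⟩)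
    refine ⟨Submodule.Quotient.mk ⟨u, hu⟩, ?_⟩
    erw [Submodule.Quotient.eq]
    show u - (s + u) ∈ 𝔪 ^ (j + 1) • P
    simpa using neg_mem hs

theorem grPieceToIm_surjective (P : Submodule S S) (t j : ℕ) :
    Function.Surjective (grPieceToIm k nA P t j) := by
  intro z
  obtain ⟨⟨_, v, hv, rfl⟩, rfl⟩ := Submodule.Quotient.mk_surjective _ z
  exact ⟨Submodule.Quotient.mk ⟨v, hv⟩, rfl⟩

variable (k) {w : Fin (nA + 1) → ℤ} {e : ℤ}

theorem Mfilt_eq_restrictSupportIdeal (hw : ∀ i, 0 ≤ w i) (t : ℕ) :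
    Mfilt k nA w e t = restrictSupportIdeal k (mfiltExps w e t) (isUpperSet_mfiltExps hw t) := by
  rw [Mfilt, trunc_eq_restrictSupportIdeal k _ hw, yvar, span_X_pow_eq_restrictSupportIdeal,
    restrictSupportIdeal_inf]
  rfl

theorem pow_smul_Mfilt_eq (hw : ∀ i, 0 ≤ w i) (j t : ℕ) :
    𝔪 ^ j • Mfilt k nA w e t =
      restrictSupportIdeal k (powSmulMfiltExps w e j t) (isUpperSet_powSmulMfiltExps j t) := by
  rw [Ideal.smul_eq_mul, Mfilt_eq_restrictSupportIdeal k hw, maxIdeal, pow_idealOfVars,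
    restrictSupportIdeal_mul]
  rfl

theorem pow_smul_Mfilt_succ_inf_le (hw : ∀ i, 0 ≤ w i)
    (hd : ∀ l : Fin nA, w l.castSucc ≤ w (Fin.last nA)) {i : ℕ}
    (hie : i * w (Fin.last nA) < e) (j : ℕ) :
    𝔪 ^ j • Mfilt k nA w e (i + 1) ⊓ 𝔪 ^ (j + 1) • Mfilt k nA w e i ≤
      𝔪 ^ (j + 1) • Mfilt k nA w e (i + 1) := by
  rw [pow_smul_Mfilt_eq k hw, pow_smul_Mfilt_eq k hw, pow_smul_Mfilt_eq k hw,
    restrictSupportIdeal_inf]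
  exact restrictSupportIdeal_mono fun a ⟨ha', ha⟩ =>
    mem_powSmulMfiltExps_succ hd hie ha (le_apply_last_of_mem_powSmulMfiltExps ha')

theorem pow_smul_Mfilt_inf_sup_le (hw : ∀ i, 0 ≤ w i)
    (hd : ∀ l : Fin nA, w l.castSucc ≤ w (Fin.last nA)) {i : ℕ}
    (hie : i * w (Fin.last nA) < e) (j : ℕ) :
    𝔪 ^ j • Mfilt k nA w e i ⊓
        (𝔪 ^ (j + 1) • Mfilt k nA w e i ⊔ Submodule.span S {yvar k nA ^ (i + 1)}) ≤
      𝔪 ^ (j + 1) • Mfilt k nA w e i ⊔ 𝔪 ^ j • Mfilt k nA w e (i + 1) := by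
  rw [pow_smul_Mfilt_eq k hw, pow_smul_Mfilt_eq k hw, pow_smul_Mfilt_eq k hw, yvar,
    span_X_pow_eq_restrictSupportIdeal, restrictSupportIdeal_sup, restrictSupportIdeal_inf,
    restrictSupportIdeal_sup]
  refine restrictSupportIdeal_mono ?_
  rintro a ⟨ha, ha' | hay⟩
  exacts [Or.inl ha', Or.inr (mem_powSmulMfiltExps_succ hd hie ha hay)]

end Filtration

theorem mul_lt_of_lt_ceilDiv {e d : ℤ} (hd : 0 < d) {i : ℕ} (hi : i < ceilDiv e d) :
    i * d < e := by
  have hi' : ((i : ℤ) : ℚ) < e / d := Int.lt_ceil.1 (Int.lt_toNat.1 hi)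
  rw [lt_div_iff₀ (by exact_mod_cast hd)] at hi'
  exact_mod_cast hi'

theorem grMod_filtration_ses_general (k : Type) [Field k] (nA : ℕ)
    (w : Fin (nA + 1) → ℤ) (hw : ∀ i, 0 < w i)
    (hd : ∀ l : Fin nA, w (Fin.castSucc l) ≤ w (Fin.last nA))
    (e : ℤ) (i : ℕ) (hi : i < ceilDiv e (w (Fin.last nA)))
    (h : Mfilt k nA w e (i + 1) ≤ Mfilt k nA w e i) (j : ℕ) :
    Function.Injective (grPieceMap k nA h j) ∧
    LinearMap.range (grPieceMap k nA h j) =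
      LinearMap.ker (grPieceToIm k nA (Mfilt k nA w e i) (i + 1) j) ∧
    Function.Surjective (grPieceToIm k nA (Mfilt k nA w e i) (i + 1) j) := by
  have hw₀ : ∀ l, 0 ≤ w l := fun l => (hw l).le
  have hie := mul_lt_of_lt_ceilDiv (hw _) hi
  exact ⟨grPieceMap_injective h j (pow_smul_Mfilt_succ_inf_le k hw₀ hd hie j),
    range_grPieceMap_eq_ker_grPieceToIm h _ j inf_le_right
      (pow_smul_Mfilt_inf_sup_le k hw₀ hd hie j),
    grPieceToIm_surjective _ _ j⟩

/-- For `0 ≤ i < N = ⌈e/d⌉`, the short exact sequence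
`0 → M^{(i+1)} → M^{(i)} → A^{(i)} → 0` induces a short exact sequence
`0 → gr_m(M^{(i+1)}) → gr_m(M^{(i)}) → gr_m(A^{(i)}) → 0` of `gr_m(S)`-modules.
Since the induced maps of associated graded modules are degree-preserving, this is
stated degreewise: for every degree `j`, the induced sequence of `j`-th graded pieces
`0 → m^j M^{(i+1)}/m^{j+1} M^{(i+1)} → m^j M^{(i)}/m^{j+1} M^{(i)} →
m^j A^{(i)}/m^{j+1} A^{(i)} → 0` (with the maps induced by the inclusion
`M^{(i+1)} ⊆ M^{(i)}` and the surjection `M^{(i)} → A^{(i)} = M^{(i)}/M^{(i+1)}`,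
realizing `A^{(i)}` as the image of `M^{(i)}` in `S/(y^{i+1})`) is exact. -/
theorem grMod_filtration_ses (k : Type) [Field k] (nA : ℕ)
    (w : Fin (nA + 1) → ℤ) (hw : ∀ i, 0 < w i)
    (hd : ∀ l : Fin nA, w (Fin.castSucc l) ≤ w (Fin.last nA))
    (e : ℤ) (he : 0 < e) (i : ℕ) (hi : i < ceilDiv e (w (Fin.last nA)))
    (h : Mfilt k nA w e (i + 1) ≤ Mfilt k nA w e i) (j : ℕ) :
    Function.Injective (grPieceMap k nA h j) ∧
    LinearMap.range (grPieceMap k nA h j) =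
      LinearMap.ker (grPieceToIm k nA (Mfilt k nA w e i) (i + 1) j) ∧
    Function.Surjective (grPieceToIm k nA (Mfilt k nA w e i) (i + 1) j) :=
  grMod_filtration_ses_general k nA w hw hd e i hi h j
end
end
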